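/- Let φ satisfy: for some constants C, m with φ'(s) ≥ C|s|^{m-1} whenever |s| ≥ C, and let the smoothing estimate sup_x |u(x,t)| ≤ max{C, C₁ t^{-γ_p} ‖u₀‖_p^{δ_p}} hold at t = 1 for all solutions, with γ_p = N/(N(m-1) + σp) and δ_p = σpγ_p/N, for the class of nonlinearities satisfying φ'(s) ≥ C|s|^{m-1} for ALL s (m > 0). Then the rescaling v(x,t) = λ^{γ_p} u(λ^{pγ_p/N} x, λ t) solves ∂_t v + (-Δ)^{σ/2} φ̃(v) = 0 with φ̃(s) = λ^{m γ_p} φ(λ^{-γ_p} s), and φ̃'(s) = λ^{(m-1)γ_p} φ'(λ^{-γ_p}s) ≥ C|s|^{m-1}; consequently, ‖u(·,t)‖_∞ ≤ C₁ t^{-γ_p} ‖u₀‖_p^{δ_p} for every t > 0. -/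

import Mathlib

/-!
The equation is invariant under the two-parameter rescaling `u ↦ a u(B x, τ t)` with
`B^σ = τ a^(1-m)`, which replaces `φ` by `a^m φ(·/a)` and so preserves the lower bound
`φ' ≥ C|s|^(m-1)`. Applying the smoothing estimate at time `1` to the rescaled solution with
`τ = t` gives `a |u(x,t)| ≤ max C (a C₁ t^(-γ_p) ‖u₀‖_p^(δ_p))`, the exponents making the second
term linear in `a`; dividing by `a` and letting `a → ∞` removes the constant `C`.
-/

open MeasureTheory

/-- The fractional Laplacian `(-Δ)^{σ/2}` (up to its normalizing constant), defined
through the second-difference singular integral. -/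
noncomputable def fracLap (σ : ℝ) {N : ℕ} (w : EuclideanSpace ℝ (Fin N) → ℝ)
    (x : EuclideanSpace ℝ (Fin N)) : ℝ :=
  ∫ z : EuclideanSpace ℝ (Fin N), (2 * w x - w (x + z) - w (x - z)) / ‖z‖ ^ ((N : ℝ) + σ)

/-- `w` is a (pointwise) solution of `∂_t w + (-Δ)^{σ/2}ψ(w) = 0` on `ℝ^N × (0,∞)`
with initial data `w₀`. -/
def IsSol (σ : ℝ) {N : ℕ} (ψ : ℝ → ℝ) (w : EuclideanSpace ℝ (Fin N) × ℝ → ℝ)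
    (w₀ : EuclideanSpace ℝ (Fin N) → ℝ) : Prop :=
  (∀ x, w (x, 0) = w₀ x) ∧
  ∀ x (t : ℝ), 0 < t →
    HasDerivAt (fun s => w (x, s)) (-(fracLap σ (fun y => ψ (w (y, t))) x)) t

open Filter Topology

theorem eLpNorm_comp_smul {E F : Type*} [NormedAddCommGroup E] [NormedSpace ℝ E]
    [MeasurableSpace E] [BorelSpace E] [FiniteDimensional ℝ E] (μ : Measure E)
    [μ.IsAddHaarMeasure] [NormedAddCommGroup F] (g : E → F) {B : ℝ} (hB : B ≠ 0)
    (p : ENNReal) :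
    eLpNorm (fun x => g (B • x)) p μ
      = ENNReal.ofReal |(B ^ Module.finrank ℝ E)⁻¹| ^ (1 / p).toReal * eLpNorm g p μ := by
  have hc : ENNReal.ofReal |(B ^ Module.finrank ℝ E)⁻¹| ≠ 0 := by
    have : B ^ Module.finrank ℝ E ≠ 0 := pow_ne_zero _ hB
    positivity
  rw [← smul_eq_mul, ← eLpNorm_smul_measure_of_ne_zero hc, ← Measure.map_addHaar_smul μ hB,
    (measurableEmbedding_const_smul₀ hB).eLpNorm_map_measure]
  rfl

theorem eLpNorm_const_mul_comp_smul {N : ℕ} (g : EuclideanSpace ℝ (Fin N) → ℝ)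
    {p A B U : ℝ} (hp : 0 < p) (hA : 0 ≤ A) (hB : 0 < B)
    (hg : eLpNorm g (ENNReal.ofReal p) volume = ENNReal.ofReal U) :
    eLpNorm (fun x => A * g (B • x)) (ENNReal.ofReal p) volume
      = ENNReal.ofReal (A * B ^ (-(N : ℝ) / p) * U) := by
  have hscale : |((B ^ N)⁻¹ : ℝ)| ^ (1 / p) = B ^ (-(N : ℝ) / p) := by
    rw [abs_of_pos (by positivity), ← Real.rpow_natCast, ← Real.rpow_neg hB.le,
      ← Real.rpow_mul hB.le, neg_mul, mul_one_div, neg_div]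
  rw [show (fun x => A * g (B • x)) = A • fun x => g (B • x) from rfl, eLpNorm_const_smul,
    eLpNorm_comp_smul volume g hB.ne', finrank_euclideanSpace_fin, hg,
    ENNReal.toReal_div, ENNReal.toReal_one, ENNReal.toReal_ofReal hp.le,
    ENNReal.ofReal_rpow_of_nonneg (abs_nonneg _) (by positivity), hscale,
    Real.enorm_eq_ofReal hA, ← ENNReal.ofReal_mul (by positivity),
    ← ENNReal.ofReal_mul hA, mul_assoc]

theorem fracLap_const_mul_comp_smul {N : ℕ} (σ : ℝ) (g : EuclideanSpace ℝ (Fin N) → ℝ)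
    (c : ℝ) {B : ℝ} (hB : 0 < B) (x : EuclideanSpace ℝ (Fin N)) :
    fracLap σ (fun y => c * g (B • y)) x = c * B ^ σ * fracLap σ g (B • x) := by
  set F : EuclideanSpace ℝ (Fin N) → ℝ :=
    fun z => (2 * g (B • x) - g (B • x + z) - g (B • x - z)) / ‖z‖ ^ ((N : ℝ) + σ)
  have hF : ∀ z, (2 * (c * g (B • x)) - c * g (B • (x + z)) - c * g (B • (x - z)))
      / ‖z‖ ^ ((N : ℝ) + σ) = c * B ^ ((N : ℝ) + σ) * F (B • z) := by
    intro z
    rcases eq_or_ne z 0 with rfl | hz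
    · simp only [F, add_zero, sub_zero, smul_zero]
      ring
    · have : 0 < ‖z‖ ^ ((N : ℝ) + σ) := by positivity
      simp only [F, smul_add, smul_sub, norm_smul, Real.norm_eq_abs, abs_of_pos hB,
        Real.mul_rpow hB.le (norm_nonneg z)]
      field_simp
  have hBN : B ^ ((N : ℝ) + σ) = B ^ N * B ^ σ := by
    rw [Real.rpow_add hB, Real.rpow_natCast]
  simp only [fracLap, hF]
  rw [integral_const_mul, Measure.integral_comp_smul_of_nonneg volume F B (hR := hB.le),
    finrank_euclideanSpace_fin, smul_eq_mul, hBN]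
  field_simp
  rfl

theorem deriv_const_mul_comp_mul (φ : ℝ → ℝ) (c b s : ℝ) :
    deriv (fun r => c * φ (b * r)) s = c * b * deriv φ (b * s) := by
  rw [deriv_const_mul_field, deriv_comp_mul_left, smul_eq_mul, mul_assoc]

theorem le_deriv_const_mul_comp_mul {φ : ℝ → ℝ} {C m : ℝ}
    (hφ : ∀ s, C * |s| ^ (m - 1) ≤ deriv φ s) {c b : ℝ} (hb : 0 < b) (hcb : c * b ^ m = 1)
    (s : ℝ) : C * |s| ^ (m - 1) ≤ deriv (fun r => c * φ (b * r)) s := by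
  have hcb' : c * b * b ^ (m - 1) = 1 := by
    rw [Real.rpow_sub_one hb.ne', ← hcb]
    field_simp
  have hc : 0 ≤ c * b := by
    have := Real.rpow_pos_of_pos hb m
    nlinarith
  calc C * |s| ^ (m - 1) = c * b * (C * |b * s| ^ (m - 1)) := by
        rw [abs_mul, abs_of_pos hb, Real.mul_rpow hb.le (abs_nonneg s)]
        linear_combination (-(C * |s| ^ (m - 1))) * hcb'
    _ ≤ c * b * deriv φ (b * s) := mul_le_mul_of_nonneg_left (hφ _) hc
    _ = deriv (fun r => c * φ (b * r)) s := (deriv_const_mul_comp_mul φ c b s).symm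

theorem IsSol.rescale {σ : ℝ} {N : ℕ} {φ ψ : ℝ → ℝ} {u : EuclideanSpace ℝ (Fin N) × ℝ → ℝ}
    {u₀ : EuclideanSpace ℝ (Fin N) → ℝ} (hu : IsSol σ φ u u₀) {A B τ : ℝ}
    (hB : 0 < B) (hτ : 0 < τ) (hψ : ∀ s, ψ (A * s) = A * τ * B ^ (-σ) * φ s) :
    IsSol σ ψ (fun Y => A * u (B • Y.1, τ * Y.2)) (fun x => A * u₀ (B • x)) := by
  refine ⟨fun x => by simp only [mul_zero, hu.1], fun x t ht => ?_⟩
  have hlap : fracLap σ (fun y => ψ (A * u (B • y, τ * t))) x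
      = A * τ * fracLap σ (fun y => φ (u (y, τ * t))) (B • x) := by
    simp only [hψ]
    rw [fracLap_const_mul_comp_smul σ (fun y => φ (u (y, τ * t))) _ hB, mul_assoc (A * τ),
      ← Real.rpow_add hB, neg_add_cancel, Real.rpow_zero, mul_one]
  have hd : HasDerivAt (fun s => A * u (B • x, τ * s))
      (A * (-fracLap σ (fun y => φ (u (y, τ * t))) (B • x) * τ)) t :=
    ((hu.2 (B • x) (τ * t) (mul_pos hτ ht)).comp t
      ((hasDerivAt_id t).const_mul τ |>.congr_deriv (mul_one τ))).const_mul A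
  convert hd using 1
  dsimp only
  rw [hlap]
  ring

def SmoothingAtOne (N : ℕ) (σ m p C C₁ δ : ℝ) : Prop :=
  ∀ (ψ : ℝ → ℝ) (w : EuclideanSpace ℝ (Fin N) × ℝ → ℝ)
    (w₀ : EuclideanSpace ℝ (Fin N) → ℝ) (Kp : ℝ), 0 ≤ Kp →
    IsSol σ ψ w w₀ →
    (∀ s : ℝ, C * |s| ^ (m - 1) ≤ deriv ψ s) →
    eLpNorm w₀ (ENNReal.ofReal p) volume = ENNReal.ofReal Kp →
    ∀ x, |w (x, 1)| ≤ max C (C₁ * Kp ^ δ)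

theorem SmoothingAtOne.mul_abs_le {N : ℕ} {σ m p C C₁ δ : ℝ}
    (hS : SmoothingAtOne N σ m p C C₁ δ) (hσ : σ ≠ 0) (hp : 0 < p) {φ : ℝ → ℝ}
    (hφ : ∀ s, C * |s| ^ (m - 1) ≤ deriv φ s) {u : EuclideanSpace ℝ (Fin N) × ℝ → ℝ}
    {u₀ : EuclideanSpace ℝ (Fin N) → ℝ} (hu : IsSol σ φ u u₀) {U : ℝ} (hU : 0 ≤ U)
    (hu₀ : eLpNorm u₀ (ENNReal.ofReal p) volume = ENNReal.ofReal U) {a t : ℝ} (ha : 0 < a)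
    (ht : 0 < t) (x : EuclideanSpace ℝ (Fin N)) :
    a * |u (x, t)| ≤ max C (C₁ * (a * (t * a ^ (1 - m)) ^ (-(N / (σ * p))) * U) ^ δ) := by
  -- the space scale `B` is chosen so that `t * B ^ (-σ) = a ^ (m - 1)`
  set B := (t * a ^ (1 - m)) ^ σ⁻¹
  have htam : 0 < t * a ^ (1 - m) := by positivity
  have hB : 0 < B := by positivity
  have hBσ : a * t * B ^ (-σ) = a ^ m := by
    rw [← Real.rpow_mul htam.le, inv_mul_eq_div, neg_div, div_self hσ, Real.rpow_neg_one,
      Real.rpow_sub ha, Real.rpow_one]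
    field_simp
  have hsol : IsSol σ (fun r => a ^ m * φ (a⁻¹ * r)) (fun Y => a * u (B • Y.1, t * Y.2))
      (fun x => a * u₀ (B • x)) :=
    hu.rescale hB ht fun s => by rw [inv_mul_cancel_left₀ ha.ne', hBσ]
  have hderiv := le_deriv_const_mul_comp_mul hφ (inv_pos.2 ha)
    (by rw [Real.inv_rpow ha.le, mul_inv_cancel₀ (by positivity)])
  have hnorm := eLpNorm_const_mul_comp_smul u₀ hp ha.le hB hu₀
  have hBN : B ^ (-(N : ℝ) / p) = (t * a ^ (1 - m)) ^ (-(N / (σ * p))) := by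
    rw [← Real.rpow_mul htam.le]; congr 1; field_simp
  rw [hBN] at hnorm
  simpa [abs_mul, abs_of_pos ha, smul_smul, mul_inv_cancel₀ hB.ne'] using
    hS _ _ _ _ (by positivity) hsol hderiv hnorm (B⁻¹ • x)

-- `a (t a^(1-m))^(-q) U` with `q = N/(σp)` is the `L^p` norm of the datum rescaled in
-- `SmoothingAtOne.mul_abs_le`; the exponent relations make its `δ`-th power linear in `a`.
theorem rescaled_lpNorm_rpow_eq {a t U m q γ δ : ℝ} (ha : 0 < a) (ht : 0 < t) (hU : 0 ≤ U)
    (hδq : δ * q = γ) (hδγ : δ + (m - 1) * γ = 1) :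
    (a * (t * a ^ (1 - m)) ^ (-q) * U) ^ δ = a * t ^ (-γ) * U ^ δ := by
  have ham : 0 < a ^ (1 - m) := by positivity
  calc (a * (t * a ^ (1 - m)) ^ (-q) * U) ^ δ
      = a ^ δ * t ^ (-(δ * q)) * a ^ ((1 - m) * -(δ * q)) * U ^ δ := by
        rw [Real.mul_rpow (by positivity) hU, Real.mul_rpow ha.le (by positivity),
          ← Real.rpow_mul (by positivity), Real.mul_rpow ht.le ham.le, ← Real.rpow_mul ha.le]
        ring_nf
    _ = a ^ (δ + (m - 1) * γ) * t ^ (-γ) * U ^ δ := by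
        rw [Real.rpow_add ha, hδq]
        ring_nf
    _ = a * t ^ (-γ) * U ^ δ := by rw [hδγ, Real.rpow_one]

theorem le_of_forall_pos_mul_le_max {a C D : ℝ} (hD : 0 ≤ D)
    (h : ∀ b > 0, b * a ≤ max C (b * D)) : a ≤ D := by
  have hdiv : ∀ b > 0, a ≤ max (C / b) D := fun b hb => by
    rw [← mul_div_cancel_left₀ D hb.ne', max_div_div_right hb.le, le_div_iff₀' hb]
    exact h b hb
  have hlim : Tendsto (fun b => max (C / b) D) atTop (𝓝 (max 0 D)) :=
    (tendsto_const_nhds.div_atTop tendsto_id).max tendsto_const_nhds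
  rw [max_eq_right hD] at hlim
  exact ge_of_tendsto hlim ((eventually_gt_atTop 0).mono hdiv)

theorem scaling_decay_general (N : ℕ) (hN : 1 ≤ N) (σ m p C C₁ γp δp Up : ℝ)
    (hσ : 0 < σ) (hp : 1 ≤ p) (hpm : (1 - m) * N / σ < p)
    (hγp : γp = N / (N * (m - 1) + σ * p)) (hδp : δp = σ * p * γp / N)
    (hC₁ : 0 < C₁) (hUp : 0 ≤ Up)
    (φ : ℝ → ℝ)
    (hφ' : ∀ s : ℝ, C * |s| ^ (m - 1) ≤ deriv φ s)
    (u : EuclideanSpace ℝ (Fin N) × ℝ → ℝ) (u₀ : EuclideanSpace ℝ (Fin N) → ℝ)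
    (hu : IsSol σ φ u u₀)
    (hUpnorm : eLpNorm u₀ (ENNReal.ofReal p) volume = ENNReal.ofReal Up)
    (hSmooth : ∀ (ψ : ℝ → ℝ) (w : EuclideanSpace ℝ (Fin N) × ℝ → ℝ)
        (w₀ : EuclideanSpace ℝ (Fin N) → ℝ) (Kp : ℝ), 0 ≤ Kp →
        IsSol σ ψ w w₀ →
        (∀ s : ℝ, C * |s| ^ (m - 1) ≤ deriv ψ s) →
        eLpNorm w₀ (ENNReal.ofReal p) volume = ENNReal.ofReal Kp →
        ∀ x, |w (x, 1)| ≤ max C (C₁ * Kp ^ δp)) :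
    (∀ lam : ℝ, 0 < lam → ∀ s : ℝ,
      deriv (fun r => lam ^ (m * γp) * φ (lam ^ (-γp) * r)) s
        = lam ^ ((m - 1) * γp) * deriv φ (lam ^ (-γp) * s)) ∧
    (∀ lam : ℝ, 0 < lam → ∀ s : ℝ,
      C * |s| ^ (m - 1) ≤ deriv (fun r => lam ^ (m * γp) * φ (lam ^ (-γp) * r)) s) ∧
    (∀ lam : ℝ, 0 < lam →
      IsSol σ (fun r => lam ^ (m * γp) * φ (lam ^ (-γp) * r))
        (fun Y : EuclideanSpace ℝ (Fin N) × ℝ =>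
          lam ^ γp * u (lam ^ (p * γp / N) • Y.1, lam * Y.2))
        (fun x => lam ^ γp * u₀ (lam ^ (p * γp / N) • x))) ∧
    (∀ t : ℝ, 0 < t → ∀ x, |u (x, t)| ≤ C₁ * t ^ (-γp) * Up ^ δp) := by
  have hN0 : (0 : ℝ) < N := by exact_mod_cast hN
  have hp0 : 0 < p := by linarith
  have hden : 0 < N * (m - 1) + σ * p := by
    have := (div_lt_iff₀ hσ).1 hpm
    nlinarith
  have hδγ : δp + (m - 1) * γp = 1 := by
    rw [hδp, hγp]
    field_simp
    ring
  refine ⟨fun lam hlam s => ?_, fun lam hlam => le_deriv_const_mul_comp_mul hφ' (by positivity) ?_,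
    fun lam hlam => hu.rescale (by positivity) hlam fun s => ?_, fun t ht x => ?_⟩
  · rw [deriv_const_mul_comp_mul, ← Real.rpow_add hlam]
    ring_nf
  · rw [← Real.rpow_mul hlam.le, ← Real.rpow_add hlam]
    ring_nf
    exact Real.rpow_zero lam
  · rw [← mul_assoc, ← Real.rpow_add hlam, neg_add_cancel, Real.rpow_zero, one_mul,
      ← Real.rpow_mul hlam.le, ← Real.rpow_add_one hlam.ne', ← Real.rpow_add hlam]
    congr 2
    linear_combination hδγ - hδp
  · refine le_of_forall_pos_mul_le_max (C := C) (by positivity) fun a ha => ?_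
    have h := SmoothingAtOne.mul_abs_le hSmooth hσ.ne' hp0 hφ' hu hUp hUpnorm ha ht x
    rw [rescaled_lpNorm_rpow_eq ha ht hUp (by rw [hδp]; field_simp) hδγ] at h
    convert h using 2
    ring

/-- Scaling argument for the smoothing effect: the rescaled function
`v(x,t) = λ^{γ_p} u(λ^{pγ_p/N} x, λt)` solves the equation with nonlinearity
`φ̃(s) = λ^{mγ_p} φ(λ^{-γ_p}s)`, whose derivative is
`φ̃'(s) = λ^{(m-1)γ_p} φ'(λ^{-γ_p}s) ≥ C|s|^{m-1}`; consequently, from the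
smoothing estimate at `t = 1`, `‖u(·,t)‖_∞ ≤ C₁ t^{-γ_p} ‖u₀‖_p^{δ_p}` for all `t > 0`. -/
theorem scaling_decay (N : ℕ) (hN : 1 ≤ N) (σ m p C C₁ γp δp Up : ℝ)
    (hσ : 0 < σ) (hσ2 : σ < 2) (hm : 0 < m) (hp : 1 ≤ p) (hpm : (1 - m) * N / σ < p)
    (hγp : γp = N / (N * (m - 1) + σ * p)) (hδp : δp = σ * p * γp / N)
    (hC : 0 < C) (hC₁ : 0 < C₁) (hUp : 0 ≤ Up)
    (φ : ℝ → ℝ) (hφ : Differentiable ℝ φ)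
    (hφ' : ∀ s : ℝ, C * |s| ^ (m - 1) ≤ deriv φ s)
    (u : EuclideanSpace ℝ (Fin N) × ℝ → ℝ) (u₀ : EuclideanSpace ℝ (Fin N) → ℝ)
    (hu : IsSol σ φ u u₀)
    (hUpnorm : eLpNorm u₀ (ENNReal.ofReal p) volume = ENNReal.ofReal Up)
    (hSmooth : ∀ (ψ : ℝ → ℝ) (w : EuclideanSpace ℝ (Fin N) × ℝ → ℝ)
        (w₀ : EuclideanSpace ℝ (Fin N) → ℝ) (Kp : ℝ), 0 ≤ Kp →
        IsSol σ ψ w w₀ →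
        (∀ s : ℝ, C * |s| ^ (m - 1) ≤ deriv ψ s) →
        eLpNorm w₀ (ENNReal.ofReal p) volume = ENNReal.ofReal Kp →
        ∀ x, |w (x, 1)| ≤ max C (C₁ * Kp ^ δp)) :
    (∀ lam : ℝ, 0 < lam → ∀ s : ℝ,
      deriv (fun r => lam ^ (m * γp) * φ (lam ^ (-γp) * r)) s
        = lam ^ ((m - 1) * γp) * deriv φ (lam ^ (-γp) * s)) ∧
    (∀ lam : ℝ, 0 < lam → ∀ s : ℝ,
      C * |s| ^ (m - 1) ≤ deriv (fun r => lam ^ (m * γp) * φ (lam ^ (-γp) * r)) s) ∧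
    (∀ lam : ℝ, 0 < lam →
      IsSol σ (fun r => lam ^ (m * γp) * φ (lam ^ (-γp) * r))
        (fun Y : EuclideanSpace ℝ (Fin N) × ℝ =>
          lam ^ γp * u (lam ^ (p * γp / N) • Y.1, lam * Y.2))
        (fun x => lam ^ γp * u₀ (lam ^ (p * γp / N) • x))) ∧
    (∀ t : ℝ, 0 < t → ∀ x, |u (x, t)| ≤ C₁ * t ^ (-γp) * Up ^ δp) :=
  scaling_decay_general N hN σ m p C C₁ γp δp Up hσ hp hpm hγp hδp hC₁ hUp φ hφ' u u₀ hu hUpnorm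
    hSmooth
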